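/- arXiv:1309.2697 — 5 statements merged into one kernel-verified Lean document; each statement's English description precedes it below -/
import Mathlib

section
/- Define X_0 = 1, X_1 = 1 and, for n ≥ 2, X_n = 2(n−1)·X_{n−1} + Σ_{j=2}^{n−2} (j−1)·X_j·X_{n−j} (the sum being empty for n ≤ 3), and let X(t) = Σ_{n≥0} X_n t^n be the corresponding formal power series over ℚ. Then for every n ≥ 2, the coefficient of t^{n−1} in X(t)^n equals n·(2n−3)!!. -/
/-- The sequence `X_n` counting equivalence classes of circular planar electrical networks:
`X_0 = 1`, `X_1 = 1` and, for `n ≥ 2`,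
`X_n = 2(n-1) X_{n-1} + ∑_{j=2}^{n-2} (j-1) X_j X_{n-j}` (the sum being empty for `n ≤ 3`;
here it is written over the attached index set to establish termination). -/
def X : ℕ → ℕ
  | 0 => 1
  | 1 => 1
  | n + 2 =>
      2 * (n + 1) * X (n + 1) +
        ∑ j ∈ (Finset.Icc 2 n).attach, (j.1 - 1) * X j.1 * X (n + 2 - j.1)
decreasing_by
  · exact Nat.lt_succ_self (n + 1)
  · have := j.2; rw [Finset.mem_Icc] at this; omega
  · have := j.2; rw [Finset.mem_Icc] at this; omega

/-!
The recurrence says that `U = ∑ X_{n+1} tⁿ` satisfies `U = 1 + 2tU + t²U'(1 + U)`, so that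
`Y = 1 + tU` satisfies `tY'(1 - t - Y) = Y(1 + t - Y)`. Multiplying by `(k+1)(k+2)Yᵏ` gives a
linear relation between `t(Y^{k+1})'`, `t(Y^{k+2})'`, `Y^{k+1}` and `Y^{k+2}`. At `t^{k+1}` the
coefficients of `Y^{k+1}` cancel, leaving `(k+1)[t^{k+1}]Y^{k+2} = (k+2)(2k+1)[t^k]Y^{k+1}`, which
telescopes to `[t^k]Y^{k+1} = (k+1)(2k-1)!!`.
-/

open Finset
open PowerSeries hiding X
open PowerSeries renaming X → T
open scoped Nat

lemma X_one : X 1 = 1 := by rw [X]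

lemma X_two : X 2 = 2 := by
  rw [X, X]; rfl

lemma X_add_three (r : ℕ) :
    X (r + 3) =
      (r + 3) * X (r + 2) + ∑ p ∈ antidiagonal r, (p.1 + 1) * X (p.1 + 2) * X (p.2 + 1) := by
  have hsum : ∑ a ∈ range r, (2 + a - 1) * X (2 + a) * X (r + 3 - (2 + a)) =
      ∑ a ∈ range r, (a + 1) * X (a + 2) * X (r - a + 1) :=
    sum_congr rfl fun a ha => by
      rw [mem_range] at ha
      rw [show 2 + a - 1 = a + 1 by omega, show r + 3 - (2 + a) = r - a + 1 by omega, add_comm 2 a]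
  rw [X, sum_attach (Icc 2 (r + 1)) fun j => (j - 1) * X j * X (r + 3 - j),
    ← Ico_add_one_right_eq_Icc, sum_Ico_eq_sum_range, show r + 1 + 1 - 2 = r by omega, hsum,
    Nat.sum_antidiagonal_eq_sum_range_succ_mk, sum_range_succ, Nat.sub_self, X_one]
  ring

noncomputable def genFun : ℚ⟦X⟧ := PowerSeries.mk fun n => (X n : ℚ)

noncomputable def genFunShift : ℚ⟦X⟧ := PowerSeries.mk fun n => (X (n + 1) : ℚ)

lemma genFun_eq_X_mul_genFunShift_add_one : genFun = T * genFunShift + 1 := by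
  conv_lhs => rw [eq_X_mul_shift_add_const genFun]
  simp [genFun, genFunShift, X]

lemma genFunShift_ode :
    genFunShift = 1 + T * (genFunShift + genFunShift) + T ^ 2 * d⁄dX ℚ genFunShift
      + T ^ 2 * (d⁄dX ℚ genFunShift * genFunShift) := by
  ext (_ | _ | r)
  · simp [genFunShift, X]
  · simp [genFunShift, X_one, X_two, pow_two, coeff_one, mul_assoc]; norm_num
  · have hterm : ∀ p ∈ antidiagonal r, coeff p.1 (d⁄dX ℚ genFunShift) * coeff p.2 genFunShift =
        ((p.1 + 1) * X (p.1 + 2) * X (p.2 + 1) : ℕ) := fun p _ => by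
      simp only [genFunShift, coeff_mk, coeff_derivative]; push_cast; ring
    rw [pow_two, mul_assoc, mul_assoc, map_add, map_add, map_add, coeff_succ_X_mul,
      coeff_succ_X_mul, coeff_succ_X_mul, coeff_succ_X_mul, coeff_succ_X_mul, coeff_one,
      if_neg (by omega), coeff_mul, sum_congr rfl hterm]
    simp only [genFunShift, coeff_mk, coeff_derivative, map_add, X_add_three]
    push_cast
    ring

lemma genFun_ode : T * d⁄dX ℚ genFun * (1 - T - genFun) = genFun * (1 + T - genFun) := by
  simp only [genFun_eq_X_mul_genFunShift_add_one, map_add, Derivation.leibniz, derivative_X,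
    smul_eq_mul, derivative_one]
  linear_combination T * genFunShift_ode

section
variable {R : Type*}

lemma coeff_X_mul_derivative [CommSemiring R] (f : R⟦X⟧) (n : ℕ) :
    coeff n (T * d⁄dX R f) = n * coeff n f := by
  rcases n with _ | n
  · simp
  · rw [coeff_succ_X_mul, coeff_derivative]; push_cast; ring

lemma ode_pow_of_ode [CommRing R] {Y : R⟦X⟧}
    (hY : T * d⁄dX R Y * (1 - T - Y) = Y * (1 + T - Y)) (k : ℕ) :
    (k + 2) • (T * d⁄dX R (Y ^ (k + 1)) - T * (T * d⁄dX R (Y ^ (k + 1))))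
      - (k + 1) • (T * d⁄dX R (Y ^ (k + 2)))
      = ((k + 1) * (k + 2)) • (Y ^ (k + 1) + T * Y ^ (k + 1) - Y ^ (k + 2)) := by
  simp only [derivative_pow, nsmul_eq_mul]
  push_cast
  linear_combination ((k + 1) * (k + 2) * Y ^ k) * hY

lemma coeff_pow_recurrence_of_ode [CommRing R] {Y : R⟦X⟧}
    (hY : T * d⁄dX R Y * (1 - T - Y) = Y * (1 + T - Y)) (k : ℕ) :
    (k + 1) * coeff (k + 1) (Y ^ (k + 2)) = (k + 2) * (2 * k + 1) * coeff k (Y ^ (k + 1)) := by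
  have h := congrArg (coeff (k + 1)) (ode_pow_of_ode hY k)
  simp only [map_sub, map_add, map_nsmul, coeff_X_mul_derivative] at h
  simp only [coeff_succ_X_mul, coeff_X_mul_derivative, nsmul_eq_mul] at h
  push_cast at h
  linear_combination h

/-- Here `2 * 0 - 1 = 0` in `ℕ`, and `0‼ = 1` is the right value of `(-1)!!`. -/
lemma coeff_pow_of_ode [CommRing R] [IsDomain R] [CharZero R] {Y : R⟦X⟧}
    (hY : T * d⁄dX R Y * (1 - T - Y) = Y * (1 + T - Y)) (hY₀ : constantCoeff Y = 1) (k : ℕ) :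
    coeff k (Y ^ (k + 1)) = (k + 1) * (2 * k - 1)‼ := by
  induction k with
  | zero => simp [hY₀]
  | succ k ih =>
    refine mul_left_cancel₀ (Nat.cast_add_one_ne_zero k) ?_
    rw [coeff_pow_recurrence_of_ode hY, ih, show 2 * (k + 1) - 1 = 2 * k + 1 by omega,
      Nat.doubleFactorial_add_one]
    push_cast
    ring

end

/-- For every `n ≥ 2`, the coefficient of `t^{n-1}` in `X(t)^n` equals `n·(2n-3)!!`,
where `X(t) = ∑_{n ≥ 0} X_n t^n` is the generating function of the sequence `X` over `ℚ`. -/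
theorem coeff_pow_generating_function (n : ℕ) (hn : 2 ≤ n) :
    PowerSeries.coeff (R := ℚ) (n - 1) ((PowerSeries.mk fun i => (X i : ℚ)) ^ n) =
      n * Nat.doubleFactorial (2 * n - 3) := by
  obtain ⟨k, rfl⟩ : ∃ k, n = k + 1 := ⟨n - 1, by omega⟩
  rw [Nat.add_sub_cancel, show 2 * (k + 1) - 3 = 2 * k - 1 by omega]
  exact_mod_cast coeff_pow_of_ode genFun_ode (by simp [genFun, X]) k
end

section
/- For every n ≥ 4 and every integer j with 2 ≤ j ≤ n−2, one has (2j−1)!!·(2n−2j−1)!! ≤ 3·(2n−5)!!; that is, over the range 2 ≤ j ≤ n−2 the product (2j−1)!!·(2n−2j−1)!! is maximized at the endpoints j = 2 and j = n−2. -/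
open Nat in
lemma doubleFactorial_aux : ∀ a : ℕ, ∀ b : ℕ, a ≤ b →
    (2 * a + 3)‼ * (2 * b + 3)‼ ≤ 3 * (2 * (a + b) + 3)‼ := by
  intro a
  induction a with
  | zero =>
    intro b _
    simp [Nat.doubleFactorial]
  | succ a ih =>
    intro b hab
    have h1 : (2 * (a + 1) + 3)‼ = (2 * a + 5) * (2 * a + 3)‼ := by
      rw [show 2 * (a + 1) + 3 = (2 * a + 3) + 2 by ring, Nat.doubleFactorial_add_two]
    have h2 : (2 * (b + 1) + 3)‼ = (2 * b + 5) * (2 * b + 3)‼ := by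
      rw [show 2 * (b + 1) + 3 = (2 * b + 3) + 2 by ring, Nat.doubleFactorial_add_two]
    have key : (2 * (a + 1) + 3)‼ * (2 * b + 3)‼ ≤ (2 * a + 3)‼ * (2 * (b + 1) + 3)‼ := by
      rw [h1, h2]
      have : 2 * a + 5 ≤ 2 * b + 5 := by omega
      calc (2 * a + 5) * (2 * a + 3)‼ * (2 * b + 3)‼
          ≤ (2 * b + 5) * (2 * a + 3)‼ * (2 * b + 3)‼ := by
            exact Nat.mul_le_mul_right _ (Nat.mul_le_mul_right _ this)
        _ = (2 * a + 3)‼ * ((2 * b + 5) * (2 * b + 3)‼) := by ring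
    calc (2 * (a + 1) + 3)‼ * (2 * b + 3)‼
        ≤ (2 * a + 3)‼ * (2 * (b + 1) + 3)‼ := key
      _ ≤ 3 * (2 * (a + (b + 1)) + 3)‼ := ih (b + 1) (by omega)
      _ = 3 * (2 * ((a + 1) + b) + 3)‼ := by ring_nf

open Nat in
lemma doubleFactorial_aux' (a b : ℕ) :
    (2 * a + 3)‼ * (2 * b + 3)‼ ≤ 3 * (2 * (a + b) + 3)‼ := by
  rcases le_total a b with h | h
  · exact doubleFactorial_aux a b h
  · rw [mul_comm, Nat.add_comm a b]
    exact doubleFactorial_aux b a h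

/-- For every `n ≥ 4` and every `2 ≤ j ≤ n-2`, one has
`(2j-1)!!·(2n-2j-1)!! ≤ 3·(2n-5)!!`; i.e. over this range the product is maximized
at the endpoints `j = 2` and `j = n-2`. -/
theorem doubleFactorial_product_le (n j : ℕ) (hn : 4 ≤ n) (hj : 2 ≤ j) (hj' : j ≤ n - 2) :
    Nat.doubleFactorial (2 * j - 1) * Nat.doubleFactorial (2 * n - 2 * j - 1) ≤
      3 * Nat.doubleFactorial (2 * n - 5) := by
  obtain ⟨a, rfl⟩ : ∃ a, j = a + 2 := ⟨j - 2, by omega⟩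
  obtain ⟨b, rfl⟩ : ∃ b, n = a + b + 4 := ⟨n - a - 4, by omega⟩
  have e1 : 2 * (a + 2) - 1 = 2 * a + 3 := by omega
  have e2 : 2 * (a + b + 4) - 2 * (a + 2) - 1 = 2 * b + 3 := by omega
  have e3 : 2 * (a + b + 4) - 5 = 2 * (a + b) + 3 := by omega
  rw [e1, e2, e3]
  exact doubleFactorial_aux' a b
end

section
/- If a perfect matching M of 2n points on a circle (n ≥ 2) has a dividing line (i.e., M is not full), then the number of crossing pairs of M is at most C(n−1, 2), where C(·,·) is the binomial coefficient. -/
/-- `M` is a perfect matching of the `2n` points `0, 1, …, 2n-1` placed in clockwise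
order on a circle: a set of pairwise disjoint unordered pairs covering all `2n` points. -/
def IsPerfectMatching (n : ℕ) (M : Finset (Finset ℕ)) : Prop :=
  (∀ p ∈ M, p.card = 2) ∧
  (∀ p ∈ M, ∀ x ∈ p, x < 2 * n) ∧
  (∀ p ∈ M, ∀ q ∈ M, p ≠ q → Disjoint p q) ∧
  (∀ x, x < 2 * n → ∃ p ∈ M, x ∈ p)

/-- The chord `V_i V_j` (where the boundary vertex `V_i` lies between points `2i-2` and
`2i-1`, and `1 ≤ i < j ≤ n`) is a dividing line for `M` if no pair of `M` has exactly one
element in `{2i-1, …, 2j-2}`. -/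
def IsDividingLine (n i j : ℕ) (M : Finset (Finset ℕ)) : Prop :=
  1 ≤ i ∧ i < j ∧ j ≤ n ∧
    ∀ p ∈ M, (p ∩ Finset.Icc (2 * i - 1) (2 * j - 2)).card ≠ 1

/-- `M` is full if it has no dividing line. -/
def IsFull (n : ℕ) (M : Finset (Finset ℕ)) : Prop :=
  ∀ i j, ¬ IsDividingLine n i j M


/-- Two pairs cross if their endpoints interleave around the circle, i.e. they can be
written as `{a,b}` and `{c,d}` with `a < c < b < d`. -/
def Crosses (p q : Finset ℕ) : Prop :=
  ∃ a b c d : ℕ, a < c ∧ c < b ∧ b < d ∧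
    ((p = {a, b} ∧ q = {c, d}) ∨ (p = {c, d} ∧ q = {a, b}))

/-- The number of (unordered) crossing pairs of chords of `M`. -/
noncomputable def crossingCount (M : Finset (Finset ℕ)) : ℕ :=
  Set.ncard {s : Finset (Finset ℕ) | ∃ p ∈ M, ∃ q ∈ M, Crosses p q ∧ s = {p, q}}

lemma choose_aux (a b : ℕ) : (a+1).choose 2 + (b+1).choose 2 ≤ (a+b+1).choose 2 := by
  induction b with
  | zero => simp
  | succ b ih =>
    have h1 : (b+1+1).choose 2 = (b+1) + (b+1).choose 2 := by
      rw [Nat.choose_succ_succ, Nat.choose_one_right]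
    have h2 : (a+(b+1)+1).choose 2 = (a+b+1) + (a+b+1).choose 2 := by
      have h : a+(b+1)+1 = (a+b+1)+1 := by ring
      rw [h, Nat.choose_succ_succ, Nat.choose_one_right]
    omega

/-- If a perfect matching `M` of `2n` points on a circle (`n ≥ 2`) has a dividing line,
then its number of crossing pairs is at most `C(n-1, 2)`. -/
theorem crossingCount_le_of_not_full (n : ℕ) (hn : 2 ≤ n)
    (M : Finset (Finset ℕ)) (hM : IsPerfectMatching n M)
    (hdiv : ∃ i j, IsDividingLine n i j M) :
    crossingCount M ≤ (n - 1).choose 2 := by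
  obtain ⟨i, j, hi1, hij, hjn, hcut⟩ := hdiv
  obtain ⟨h2, hbd, hdisj, hcov⟩ := hM
  set I : Finset ℕ := Finset.Icc (2 * i - 1) (2 * j - 2) with hI
  -- every pair is inside I or disjoint from I
  have hsplit : ∀ p ∈ M, p ⊆ I ∨ p ∩ I = ∅ := by
    intro p hp
    have hc := hcut p hp
    have hle : (p ∩ I).card ≤ 2 :=
      le_trans (Finset.card_le_card Finset.inter_subset_left) (le_of_eq (h2 p hp))
    rcases (by omega : (p ∩ I).card = 0 ∨ (p ∩ I).card = 2) with h0 | h02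
    · right; exact Finset.card_eq_zero.mp h0
    · left
      have heq : p ∩ I = p :=
        Finset.eq_of_subset_of_card_le Finset.inter_subset_left (by rw [h02, h2 p hp])
      intro x hx
      have hxi : x ∈ p ∩ I := by rw [heq]; exact hx
      exact (Finset.mem_inter.mp hxi).2
  set A : Finset (Finset ℕ) := M.filter (fun p => p ⊆ I) with hA
  set B : Finset (Finset ℕ) := M.filter (fun p => p ∩ I = ∅) with hB
  have hABun : A ∪ B = M := by
    apply Finset.Subset.antisymm
    · intro p hp
      rcases Finset.mem_union.mp hp with h | h
      · exact (Finset.mem_filter.mp h).1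
      · exact (Finset.mem_filter.mp h).1
    · intro p hp
      rcases hsplit p hp with h | h
      · exact Finset.mem_union_left _ (Finset.mem_filter.mpr ⟨hp, h⟩)
      · exact Finset.mem_union_right _ (Finset.mem_filter.mpr ⟨hp, h⟩)
  have hABdisj : Disjoint A B := by
    rw [Finset.disjoint_left]
    intro p hpA hpB
    have h1 := (Finset.mem_filter.mp hpA).2
    have h2' := (Finset.mem_filter.mp hpB).2
    have : p = ∅ := by
      rw [← h2']
      exact (Finset.inter_eq_left.mpr h1).symm
    have := h2 p (Finset.mem_filter.mp hpA).1
    simp [‹p = ∅›] at this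
  -- |M| = n
  have hMcard : M.card = n := by
    have hU : M.biUnion id = Finset.range (2 * n) := by
      ext x
      simp only [Finset.mem_biUnion, id, Finset.mem_range]
      constructor
      · rintro ⟨p, hp, hx⟩; exact hbd p hp x hx
      · intro hx; exact hcov x hx
    have hc1 : (M.biUnion id).card = ∑ p ∈ M, p.card :=
      Finset.card_biUnion (fun p hp q hq hne => hdisj p hp q hq hne)
    have hc2 : ∑ p ∈ M, p.card = 2 * M.card := by
      rw [Finset.sum_congr rfl (fun p hp => h2 p hp)]
      simp [Finset.sum_const, Nat.mul_comm]
    rw [hU, Finset.card_range] at hc1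
    omega
  -- nonemptiness
  have hAne : 1 ≤ A.card := by
    obtain ⟨p, hp, hxp⟩ := hcov (2 * i - 1) (by omega)
    have hmem : 2 * i - 1 ∈ I := Finset.mem_Icc.mpr ⟨le_refl _, by omega⟩
    rcases hsplit p hp with h | h
    · exact Finset.card_pos.mpr ⟨p, Finset.mem_filter.mpr ⟨hp, h⟩⟩
    · exfalso
      have : 2 * i - 1 ∈ p ∩ I := Finset.mem_inter.mpr ⟨hxp, hmem⟩
      simp [h] at this
  have hBne : 1 ≤ B.card := by
    obtain ⟨p, hp, hxp⟩ := hcov (2 * n - 1) (by omega)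
    rcases hsplit p hp with h | h
    · exfalso
      have := Finset.mem_Icc.mp (h hxp)
      omega
    · exact Finset.card_pos.mpr ⟨p, Finset.mem_filter.mpr ⟨hp, h⟩⟩
  -- crossing set is contained in pairs within A or within B
  have hsub : {s : Finset (Finset ℕ) | ∃ p ∈ M, ∃ q ∈ M, Crosses p q ∧ s = {p, q}} ⊆
      ↑(A.powersetCard 2 ∪ B.powersetCard 2) := by
    rintro s ⟨p, hp, q, hq, hcr, rfl⟩
    obtain ⟨a, b, c, d, hac, hcb, hbd2, hpq⟩ := hcr
    have hne : p ≠ q := by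
      rcases hpq with ⟨h1, h2'⟩ | ⟨h1, h2'⟩ <;>
      · intro h
        rw [h1, h2'] at h
        have hcmem : c ∈ ({a, b} : Finset ℕ) := by
          first
          | (rw [h]; simp)
          | (rw [← h]; simp)
        simp only [Finset.mem_insert, Finset.mem_singleton] at hcmem
        omega
    have hsame : (p ⊆ I ∧ q ⊆ I) ∨ (p ∩ I = ∅ ∧ q ∩ I = ∅) := by
      have hmixed : ∀ r t : Finset ℕ, r ⊆ I → t ∩ I = ∅ →
          ¬ ((r = {a, b} ∧ t = {c, d}) ∨ (r = {c, d} ∧ t = {a, b})) := by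
        rintro r t hr ht (⟨h1, h2'⟩ | ⟨h1, h2'⟩)
        · have ha' : a ∈ I := hr (by rw [h1]; simp)
          have hb' : b ∈ I := hr (by rw [h1]; simp)
          rw [hI] at ha' hb'
          have ha2 := Finset.mem_Icc.mp ha'
          have hb2 := Finset.mem_Icc.mp hb'
          have hc' : c ∈ I := by rw [hI]; exact Finset.mem_Icc.mpr (by omega)
          have : c ∈ t ∩ I := Finset.mem_inter.mpr ⟨by rw [h2']; simp, hc'⟩
          simp [ht] at this
        · have hc' : c ∈ I := hr (by rw [h1]; simp)
          have hd' : d ∈ I := hr (by rw [h1]; simp)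
          rw [hI] at hc' hd'
          have hc2 := Finset.mem_Icc.mp hc'
          have hd2 := Finset.mem_Icc.mp hd'
          have hb' : b ∈ I := by rw [hI]; exact Finset.mem_Icc.mpr (by omega)
          have : b ∈ t ∩ I := Finset.mem_inter.mpr ⟨by rw [h2']; simp, hb'⟩
          simp [ht] at this
      rcases hsplit p hp with h1 | h1 <;> rcases hsplit q hq with h2' | h2'
      · exact Or.inl ⟨h1, h2'⟩
      · exact absurd hpq (hmixed p q h1 h2')
      · exact absurd hpq (by
          have := hmixed q p h2' h1
          rintro (⟨ha1, ha2⟩ | ⟨ha1, ha2⟩)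
          · exact this (Or.inr ⟨ha2, ha1⟩)
          · exact this (Or.inl ⟨ha2, ha1⟩))
      · exact Or.inr ⟨h1, h2'⟩
    have hcard2 : ({p, q} : Finset (Finset ℕ)).card = 2 := Finset.card_pair hne
    rcases hsame with ⟨h1, h2'⟩ | ⟨h1, h2'⟩
    · refine Finset.mem_coe.mpr (Finset.mem_union_left _ (Finset.mem_powersetCard.mpr ⟨?_, hcard2⟩))
      intro r hr
      rcases Finset.mem_insert.mp hr with rfl | hr
      · exact Finset.mem_filter.mpr ⟨hp, h1⟩
      · rw [Finset.mem_singleton] at hr; subst hr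
        exact Finset.mem_filter.mpr ⟨hq, h2'⟩
    · refine Finset.mem_coe.mpr (Finset.mem_union_right _ (Finset.mem_powersetCard.mpr ⟨?_, hcard2⟩))
      intro r hr
      rcases Finset.mem_insert.mp hr with rfl | hr
      · exact Finset.mem_filter.mpr ⟨hp, h1⟩
      · rw [Finset.mem_singleton] at hr; subst hr
        exact Finset.mem_filter.mpr ⟨hq, h2'⟩
  -- put it together
  have hle1 : crossingCount M ≤ (A.powersetCard 2 ∪ B.powersetCard 2).card := by
    have := Set.ncard_le_ncard hsub (Finset.finite_toSet _)
    rwa [Set.ncard_coe_finset] at this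
  have hle2 : (A.powersetCard 2 ∪ B.powersetCard 2).card ≤ A.card.choose 2 + B.card.choose 2 := by
    calc (A.powersetCard 2 ∪ B.powersetCard 2).card
        ≤ (A.powersetCard 2).card + (B.powersetCard 2).card := Finset.card_union_le _ _
      _ = A.card.choose 2 + B.card.choose 2 := by
          rw [Finset.card_powersetCard, Finset.card_powersetCard]
  have hsum : A.card + B.card = n := by
    rw [← Finset.card_union_of_disjoint hABdisj, hABun, hMcard]
  have hfin : A.card.choose 2 + B.card.choose 2 ≤ (n - 1).choose 2 := by
    obtain ⟨a', ha'⟩ := Nat.exists_eq_add_of_le hAne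
    obtain ⟨b', hb'⟩ := Nat.exists_eq_add_of_le hBne
    have := choose_aux a' b'
    have hn1 : n - 1 = a' + b' + 1 := by omega
    rw [ha', hb', hn1]
    have e1 : 1 + a' = a' + 1 := by ring
    have e2 : 1 + b' = b' + 1 := by ring
    rw [e1, e2]
    exact this
  omega
end

section
/- Let n ≥ 2 and let M be a full perfect matching of 2n points on a circle with {2n−2, 2n−1} ∉ M. Let x be the partner of 2n−2 in M and y the partner of 2n−1 in M, and let M′ be the perfect matching of the 2n−2 points 0, 1, …, 2n−3 (a matching of order n−1, with boundary vertices V_1, …, V_{n−1}) obtained from M by deleting the pairs containing 2n−2 and 2n−1 and adding the pair {x, y}. If M′ is not full, then among all dividing lines V_iV_j of M′ (1 ≤ i < j ≤ n−1), there is exactly one with j − i maximal. -/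
lemma partner_unique {n : ℕ} {M : Finset (Finset ℕ)} (hM : IsPerfectMatching n M)
    {p q : Finset ℕ} (hp : p ∈ M) (hq : q ∈ M) {a : ℕ} (hap : a ∈ p) (haq : a ∈ q) :
    p = q := by
  by_contra h
  exact (Finset.disjoint_left.mp (hM.2.2.1 p hp q hq h) hap) haq

lemma Icc_split (a b c : ℕ) (hab : a ≤ b + 1) (hbc : b ≤ c) :
    Finset.Icc a b ∪ Finset.Icc (b + 1) c = Finset.Icc a c := by
  ext z; simp only [Finset.mem_union, Finset.mem_Icc]; omega

lemma aux_xy (n : ℕ) (hn : 2 ≤ n) (M : Finset (Finset ℕ)) (hM : IsPerfectMatching n M)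
    (hfull : IsFull n M) (x y : ℕ)
    (hx : ({2 * n - 2, x} : Finset ℕ) ∈ M) (hy : ({2 * n - 1, y} : Finset ℕ) ∈ M)
    (M' : Finset (Finset ℕ))
    (hM' : M' = insert {x, y} ((M.erase {2 * n - 2, x}).erase {2 * n - 1, y}))
    {s t : ℕ} (hd : IsDividingLine (n - 1) s t M') :
    x ∈ Finset.Icc (2 * s - 1) (2 * t - 2) ∧ y ∈ Finset.Icc (2 * s - 1) (2 * t - 2) := by
  obtain ⟨hs1, hst, htn, hdiv⟩ := hd
  set S := Finset.Icc (2 * s - 1) (2 * t - 2) with hS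
  have hSn : ∀ z ∈ S, z < 2 * n - 2 := by
    intro z hz; rw [hS, Finset.mem_Icc] at hz; omega
  have hxyM' : ({x, y} : Finset ℕ) ∈ M' := by rw [hM']; exact Finset.mem_insert_self _ _
  have hxyS : x ∈ S → y ∈ S := by
    intro hxS
    by_contra hyS
    apply hdiv _ hxyM'
    have h1 : ({x, y} : Finset ℕ) ∩ S = {x} := by
      ext z
      simp only [Finset.mem_inter, Finset.mem_insert, Finset.mem_singleton]
      constructor
      · rintro ⟨(rfl | rfl), hzS⟩
        · rfl
        · exact absurd hzS hyS
      · rintro rfl; exact ⟨Or.inl rfl, hxS⟩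
    rw [h1, Finset.card_singleton]
  have hyxS : y ∈ S → x ∈ S := by
    intro hyS
    by_contra hxS
    apply hdiv _ hxyM'
    have h1 : ({x, y} : Finset ℕ) ∩ S = {y} := by
      ext z
      simp only [Finset.mem_inter, Finset.mem_insert, Finset.mem_singleton]
      constructor
      · rintro ⟨(rfl | rfl), hzS⟩
        · exact absurd hzS hxS
        · rfl
      · rintro rfl; exact ⟨Or.inr rfl, hyS⟩
    rw [h1, Finset.card_singleton]
  have hex : ∃ p ∈ M, (p ∩ S).card = 1 := by
    by_contra hc
    push_neg at hc
    exact hfull s t ⟨hs1, hst, by omega, fun p hp => hc p hp⟩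
  obtain ⟨p, hpM, hp1⟩ := hex
  by_cases h2n2 : 2 * n - 2 ∈ p
  · have hpx : p = {2 * n - 2, x} :=
      partner_unique hM hpM hx h2n2 (Finset.mem_insert_self _ _)
    subst hpx
    have hsub : ({2 * n - 2, x} : Finset ℕ) ∩ S ⊆ {x} := by
      intro z hz
      rw [Finset.mem_inter, Finset.mem_insert, Finset.mem_singleton] at hz
      rcases hz.1 with rfl | rfl
      · exact absurd (hSn _ hz.2) (by omega)
      · exact Finset.mem_singleton_self _
    have heq : ({2 * n - 2, x} : Finset ℕ) ∩ S = {x} :=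
      Finset.eq_of_subset_of_card_le hsub (by rw [hp1, Finset.card_singleton])
    have hxS : x ∈ S := by
      have hm : x ∈ ({2 * n - 2, x} : Finset ℕ) ∩ S := by
        rw [heq]; exact Finset.mem_singleton_self x
      exact (Finset.mem_inter.mp hm).2
    exact ⟨hxS, hxyS hxS⟩
  · by_cases h2n1 : 2 * n - 1 ∈ p
    · have hpy : p = {2 * n - 1, y} :=
        partner_unique hM hpM hy h2n1 (Finset.mem_insert_self _ _)
      subst hpy
      have hsub : ({2 * n - 1, y} : Finset ℕ) ∩ S ⊆ {y} := by
        intro z hz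
        rw [Finset.mem_inter, Finset.mem_insert, Finset.mem_singleton] at hz
        rcases hz.1 with rfl | rfl
        · exact absurd (hSn _ hz.2) (by omega)
        · exact Finset.mem_singleton_self _
      have heq : ({2 * n - 1, y} : Finset ℕ) ∩ S = {y} :=
        Finset.eq_of_subset_of_card_le hsub (by rw [hp1, Finset.card_singleton])
      have hyS : y ∈ S := by
        have hm : y ∈ ({2 * n - 1, y} : Finset ℕ) ∩ S := by
          rw [heq]; exact Finset.mem_singleton_self y
        exact (Finset.mem_inter.mp hm).2
      exact ⟨hyxS hyS, hyS⟩
    · have hpM' : p ∈ M' := by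
        rw [hM']
        apply Finset.mem_insert_of_mem
        rw [Finset.mem_erase, Finset.mem_erase]
        refine ⟨?_, ?_, hpM⟩
        · intro h; rw [h] at h2n1; exact h2n1 (Finset.mem_insert_self _ _)
        · intro h; rw [h] at h2n2; exact h2n2 (Finset.mem_insert_self _ _)
      exact absurd hp1 (hdiv p hpM')

lemma aux_nocross (n : ℕ) (hn : 2 ≤ n) (M : Finset (Finset ℕ)) (hM : IsPerfectMatching n M)
    (hfull : IsFull n M) (x y : ℕ)
    (hx : ({2 * n - 2, x} : Finset ℕ) ∈ M) (hy : ({2 * n - 1, y} : Finset ℕ) ∈ M)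
    (M' : Finset (Finset ℕ))
    (hM' : M' = insert {x, y} ((M.erase {2 * n - 2, x}).erase {2 * n - 1, y}))
    {i j k l : ℕ} (h1 : IsDividingLine (n - 1) i j M') (h2 : IsDividingLine (n - 1) k l M')
    (hik : i < k) (hkj : k < j) (hjl : j < l) : False := by
  obtain ⟨hi1, hij, hjn, hdiv1⟩ := h1
  obtain ⟨hk1, hkl, hln, hdiv2⟩ := h2
  obtain ⟨hxkl, hykl⟩ := aux_xy n hn M hM hfull x y hx hy M' hM' ⟨hk1, hkl, hln, hdiv2⟩
  rw [Finset.mem_Icc] at hxkl hykl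
  have hex : ∃ p ∈ M, (p ∩ Finset.Icc (2 * i - 1) (2 * k - 2)).card = 1 := by
    by_contra hc
    push_neg at hc
    exact hfull i k ⟨hi1, hik, by omega, fun p hp => hc p hp⟩
  obtain ⟨p, hpM, hpA⟩ := hex
  have h2n2 : 2 * n - 2 ∉ p := by
    intro h
    have hpx : p = {2 * n - 2, x} :=
      partner_unique hM hpM hx h (Finset.mem_insert_self _ _)
    rw [hpx] at hpA
    have : ({2 * n - 2, x} : Finset ℕ) ∩ Finset.Icc (2 * i - 1) (2 * k - 2) = ∅ := by
      ext z
      simp only [Finset.mem_inter, Finset.mem_insert, Finset.mem_singleton, Finset.mem_Icc,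
        Finset.notMem_empty, iff_false, not_and]
      rintro (rfl | rfl) <;> omega
    rw [this] at hpA
    simp at hpA
  have h2n1 : 2 * n - 1 ∉ p := by
    intro h
    have hpy : p = {2 * n - 1, y} :=
      partner_unique hM hpM hy h (Finset.mem_insert_self _ _)
    rw [hpy] at hpA
    have : ({2 * n - 1, y} : Finset ℕ) ∩ Finset.Icc (2 * i - 1) (2 * k - 2) = ∅ := by
      ext z
      simp only [Finset.mem_inter, Finset.mem_insert, Finset.mem_singleton, Finset.mem_Icc,
        Finset.notMem_empty, iff_false, not_and]
      rintro (rfl | rfl) <;> omega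
    rw [this] at hpA
    simp at hpA
  have hpM' : p ∈ M' := by
    rw [hM']
    apply Finset.mem_insert_of_mem
    rw [Finset.mem_erase, Finset.mem_erase]
    refine ⟨?_, ?_, hpM⟩
    · intro h; rw [h] at h2n1; exact h2n1 (Finset.mem_insert_self _ _)
    · intro h; rw [h] at h2n2; exact h2n2 (Finset.mem_insert_self _ _)
  have hcard2 : p.card = 2 := hM.1 p hpM
  set A := p ∩ Finset.Icc (2 * i - 1) (2 * k - 2) with hA
  set B := p ∩ Finset.Icc (2 * k - 1) (2 * j - 2) with hB
  set C := p ∩ Finset.Icc (2 * j - 1) (2 * l - 2) with hC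
  have hdAB : Disjoint A B := by
    rw [Finset.disjoint_left]
    intro z hzA hzB
    rw [hA, Finset.mem_inter, Finset.mem_Icc] at hzA
    rw [hB, Finset.mem_inter, Finset.mem_Icc] at hzB
    omega
  have hdBC : Disjoint B C := by
    rw [Finset.disjoint_left]
    intro z hzB hzC
    rw [hB, Finset.mem_inter, Finset.mem_Icc] at hzB
    rw [hC, Finset.mem_inter, Finset.mem_Icc] at hzC
    omega
  have hdAC : Disjoint A C := by
    rw [Finset.disjoint_left]
    intro z hzA hzC
    rw [hA, Finset.mem_inter, Finset.mem_Icc] at hzA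
    rw [hC, Finset.mem_inter, Finset.mem_Icc] at hzC
    omega
  have hABeq : p ∩ Finset.Icc (2 * i - 1) (2 * j - 2) = A ∪ B := by
    have : Finset.Icc (2 * i - 1) (2 * j - 2) =
        Finset.Icc (2 * i - 1) (2 * k - 2) ∪ Finset.Icc (2 * k - 1) (2 * j - 2) := by
      rw [show 2 * k - 1 = (2 * k - 2) + 1 by omega]
      exact (Icc_split _ _ _ (by omega) (by omega)).symm
    rw [this, Finset.inter_union_distrib_left]
  have hBCeq : p ∩ Finset.Icc (2 * k - 1) (2 * l - 2) = B ∪ C := by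
    have : Finset.Icc (2 * k - 1) (2 * l - 2) =
        Finset.Icc (2 * k - 1) (2 * j - 2) ∪ Finset.Icc (2 * j - 1) (2 * l - 2) := by
      rw [show 2 * j - 1 = (2 * j - 2) + 1 by omega]
      exact (Icc_split _ _ _ (by omega) (by omega)).symm
    rw [this, Finset.inter_union_distrib_left]
  have hABcard : (A ∪ B).card = A.card + B.card := Finset.card_union_of_disjoint hdAB
  have hBCcard : (B ∪ C).card = B.card + C.card := Finset.card_union_of_disjoint hdBC
  have hABne : (A ∪ B).card ≠ 1 := by rw [← hABeq]; exact hdiv1 p hpM'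
  have hBCne : (B ∪ C).card ≠ 1 := by rw [← hBCeq]; exact hdiv2 p hpM'
  have hABle : (A ∪ B).card ≤ 2 := by
    rw [← hcard2]
    exact Finset.card_le_card (Finset.union_subset Finset.inter_subset_left
      Finset.inter_subset_left)
  have hBCle : (B ∪ C).card ≤ 2 := by
    rw [← hcard2]
    exact Finset.card_le_card (Finset.union_subset Finset.inter_subset_left
      Finset.inter_subset_left)
  have hBcard : B.card = 1 := by omega
  have hCcard : C.card = 1 := by omega
  have hsub : A ∪ B ∪ C ⊆ p :=
    Finset.union_subset (Finset.union_subset Finset.inter_subset_left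
      Finset.inter_subset_left) Finset.inter_subset_left
  have hbig : (A ∪ B ∪ C).card = 3 := by
    rw [Finset.card_union_of_disjoint (Finset.disjoint_union_left.mpr ⟨hdAC, hdBC⟩),
      hABcard, hpA, hBcard, hCcard]
  have := Finset.card_le_card hsub
  omega

/-- Let `M` be a full perfect matching of `2n` points (`n ≥ 2`) with `{2n-2, 2n-1} ∉ M`,
let `x` be the partner of `2n-2` and `y` the partner of `2n-1` in `M`, and let `M'` be
the refinement of `M` at the boundary vertex `V_n`: the matching of order `n-1` obtained
by deleting the pairs containing `2n-2` and `2n-1` and adding the pair `{x, y}`. If `M'`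
is not full, then among all dividing lines `V_i V_j` of `M'` there is exactly one with
`j - i` maximal. -/
theorem refinement_unique_maximal_dividing_line (n : ℕ) (hn : 2 ≤ n)
    (M : Finset (Finset ℕ)) (hM : IsPerfectMatching n M) (hfull : IsFull n M)
    (hnn : ({2 * n - 2, 2 * n - 1} : Finset ℕ) ∉ M)
    (x y : ℕ)
    (hx : ({2 * n - 2, x} : Finset ℕ) ∈ M) (hy : ({2 * n - 1, y} : Finset ℕ) ∈ M)
    (M' : Finset (Finset ℕ))
    (hM' : M' = insert {x, y} ((M.erase {2 * n - 2, x}).erase {2 * n - 1, y}))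
    (hnotfull : ¬ IsFull (n - 1) M') :
    ∃! p : ℕ × ℕ, IsDividingLine (n - 1) p.1 p.2 M' ∧
      ∀ i j, IsDividingLine (n - 1) i j M' → j - i ≤ p.2 - p.1 := by
  classical
  rw [IsFull] at hnotfull
  push_neg at hnotfull
  obtain ⟨i0, j0, hd0⟩ := hnotfull
  set F : Finset (ℕ × ℕ) :=
    (Finset.Icc 1 n ×ˢ Finset.Icc 1 n).filter
      (fun q => IsDividingLine (n - 1) q.1 q.2 M') with hF
  have hmemF : ∀ i j, IsDividingLine (n - 1) i j M' → (i, j) ∈ F := by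
    intro i j hij
    rw [hF, Finset.mem_filter, Finset.mem_product, Finset.mem_Icc, Finset.mem_Icc]
    have h1 := hij.1
    have h2 := hij.2.1
    have h3 := hij.2.2.1
    exact ⟨⟨⟨h1, by omega⟩, ⟨by omega, by omega⟩⟩, hij⟩
  have hFne : F.Nonempty := ⟨(i0, j0), hmemF _ _ hd0⟩
  obtain ⟨p, hpF, hpmax⟩ := Finset.exists_max_image F (fun q => q.2 - q.1) hFne
  obtain ⟨i, j⟩ := p
  have hpd : IsDividingLine (n - 1) i j M' := (Finset.mem_filter.mp hpF).2
  refine ⟨(i, j), ⟨hpd, fun a b hab => hpmax (a, b) (hmemF a b hab)⟩, ?_⟩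
  rintro ⟨k, l⟩ ⟨hq, hqmax⟩
  have hs1 : j - i ≤ l - k := hqmax i j hpd
  have hs2 : l - k ≤ j - i := hpmax (k, l) (hmemF k l hq)
  have hij' : i < j := hpd.2.1
  have hkl' : k < l := hq.2.1
  have hi1 : 1 ≤ i := hpd.1
  have hk1 : 1 ≤ k := hq.1
  obtain ⟨hxij, _⟩ := aux_xy n hn M hM hfull x y hx hy M' hM' hpd
  obtain ⟨hxkl, _⟩ := aux_xy n hn M hM hfull x y hx hy M' hM' hq
  rw [Finset.mem_Icc] at hxij hxkl
  rcases lt_trichotomy i k with h | h | h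
  · exfalso
    have hkj : k < j := by omega
    have hjl : j < l := by omega
    exact aux_nocross n hn M hM hfull x y hx hy M' hM' hpd hq h hkj hjl
  · have : l = j := by omega
    rw [this, h]
  · exfalso
    have hil : i < l := by omega
    have hlj : l < j := by omega
    exact aux_nocross n hn M hM hfull x y hx hy M' hM' hq hpd h hil hlj
end

section
/- Let n ≥ 1, let M be a full perfect matching of 2n points on a circle, and let {x, y} ∈ M with x < y. On the 2n+2 points 0, 1, …, 2n+1 (so that the new boundary vertex V_{n+1} lies between the points 2n and 2n+1), define the crossed expansion M_c = (M ∖ {{x,y}}) ∪ {{2n, x}, {2n+1, y}} and the uncrossed expansion M_u = (M ∖ {{x,y}}) ∪ {{2n, y}, {2n+1, x}}, both perfect matchings of order n+1. Then: (a) M_c is full; (b) either M_u is full, or M_u has exactly one dividing line, and that dividing line has V_{n+1} as one of its endpoints. -/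

lemma pair_inter_card (a b : ℕ) (hab : a ≠ b) (S : Finset ℕ) :
    (({a, b} : Finset ℕ) ∩ S).card =
      (if a ∈ S then 1 else 0) + (if b ∈ S then 1 else 0) := by
  by_cases ha : a ∈ S <;> by_cases hb : b ∈ S <;>
    simp [Finset.insert_inter_of_mem, Finset.insert_inter_of_notMem,
      Finset.singleton_inter_of_mem, Finset.singleton_inter_of_notMem,
      Finset.card_insert_of_notMem, ha, hb, hab]

/-- Let `M` be a full perfect matching of `2n` points (`n ≥ 1`) and `{x, y} ∈ M` with
`x < y`. On the `2n+2` points `0, …, 2n+1` (the new boundary vertex `V_{n+1}` lying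
between points `2n` and `2n+1`), let `M_c` be the crossed expansion of `M` at the wire
`{x,y}`, and `M_u` the uncrossed expansion. Then (a) `M_c` is full; (b) either `M_u` is
full, or `M_u` has exactly one dividing line, and that dividing line has `V_{n+1}` as an
endpoint. -/
theorem expansion_fullness (n : ℕ) (hn : 1 ≤ n)
    (M : Finset (Finset ℕ)) (hM : IsPerfectMatching n M) (hfull : IsFull n M)
    (x y : ℕ) (hxy : ({x, y} : Finset ℕ) ∈ M) (hlt : x < y)
    (Mc Mu : Finset (Finset ℕ))
    (hMc : Mc = insert {2 * n, x} (insert {2 * n + 1, y} (M.erase {x, y})))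
    (hMu : Mu = insert {2 * n, y} (insert {2 * n + 1, x} (M.erase {x, y}))) :
    IsFull (n + 1) Mc ∧
      (IsFull (n + 1) Mu ∨
        ((∃! p : ℕ × ℕ, IsDividingLine (n + 1) p.1 p.2 Mu) ∧
          ∀ i j, IsDividingLine (n + 1) i j Mu → j = n + 1)) := by
  obtain ⟨hcard, hlt2n, hdisj, hcover⟩ := hM
  have hx2n : x < 2 * n := hlt2n _ hxy x (by simp)
  have hy2n : y < 2 * n := hlt2n _ hxy y (by simp)
  have hxne : x ≠ y := ne_of_lt hlt
  -- Key lemma: any dividing line of an expansion has j = n+1.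
  have key : ∀ (u v : ℕ) (M' : Finset (Finset ℕ)),
      ({u, v} : Finset ℕ) = {x, y} → u < 2 * n → v < 2 * n →
      M' = insert {2 * n, u} (insert {2 * n + 1, v} (M.erase {x, y})) →
      ∀ i j, IsDividingLine (n + 1) i j M' → j = n + 1 := by
    intro u v M' hset hu2n hv2n hM' i j hdl
    obtain ⟨hi1, hij, hjn, hcond⟩ := hdl
    by_contra hne
    have hjn' : j ≤ n := by omega
    have huv : u ≠ v := by
      have hxuv : x ∈ ({u, v} : Finset ℕ) := by rw [hset]; simp
      have hyuv : y ∈ ({u, v} : Finset ℕ) := by rw [hset]; simp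
      simp only [Finset.mem_insert, Finset.mem_singleton] at hxuv hyuv
      omega
    -- The interval excludes 2n and 2n+1.
    have h2nI : (2 * n) ∉ Finset.Icc (2 * i - 1) (2 * j - 2) := by
      simp only [Finset.mem_Icc]; omega
    have h2n1I : (2 * n + 1) ∉ Finset.Icc (2 * i - 1) (2 * j - 2) := by
      simp only [Finset.mem_Icc]; omega
    have hu := hcond {2 * n, u} (by rw [hM']; exact Finset.mem_insert_self _ _)
    have hv := hcond {2 * n + 1, v}
      (by rw [hM']; exact Finset.mem_insert_of_mem (Finset.mem_insert_self _ _))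
    rw [pair_inter_card _ _ (by omega)] at hu
    rw [pair_inter_card _ _ (by omega)] at hv
    simp only [h2nI, h2n1I, if_neg, ite_false, zero_add] at hu hv
    have huI : u ∉ Finset.Icc (2 * i - 1) (2 * j - 2) := by
      intro h; rw [if_pos h] at hu; exact hu rfl
    have hvI : v ∉ Finset.Icc (2 * i - 1) (2 * j - 2) := by
      intro h; rw [if_pos h] at hv; exact hv rfl
    refine hfull i j ⟨hi1, hij, hjn', ?_⟩
    intro p hp
    by_cases hpxy : p = {x, y}
    · subst hpxy
      rw [← hset, pair_inter_card _ _ huv, if_neg huI, if_neg hvI]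
      omega
    · exact hcond p (by
        rw [hM']
        exact Finset.mem_insert_of_mem (Finset.mem_insert_of_mem
          (Finset.mem_erase.2 ⟨hpxy, hp⟩)))
  constructor
  · -- (a) Mc is full.
    intro i j hdl
    have hj := key x y Mc rfl hx2n hy2n hMc i j hdl
    subst hj
    obtain ⟨hi1, hij, -, hcond⟩ := hdl
    have hin : i ≤ n := by omega
    have hx' := hcond {2 * n, x} (by rw [hMc]; exact Finset.mem_insert_self _ _)
    have hy' := hcond {2 * n + 1, y}
      (by rw [hMc]; exact Finset.mem_insert_of_mem (Finset.mem_insert_self _ _))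
    rw [pair_inter_card _ _ (by omega)] at hx'
    rw [pair_inter_card _ _ (by omega)] at hy'
    have h2nI : (2 * n) ∈ Finset.Icc (2 * i - 1) (2 * (n + 1) - 2) := by
      simp only [Finset.mem_Icc]; omega
    have h2n1I : (2 * n + 1) ∉ Finset.Icc (2 * i - 1) (2 * (n + 1) - 2) := by
      simp only [Finset.mem_Icc]; omega
    rw [if_pos h2nI] at hx'
    rw [if_neg h2n1I, zero_add] at hy'
    have hxI : x ∈ Finset.Icc (2 * i - 1) (2 * (n + 1) - 2) := by
      by_contra h; rw [if_neg h] at hx'; exact hx' rfl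
    have hyI : y ∉ Finset.Icc (2 * i - 1) (2 * (n + 1) - 2) := by
      intro h; rw [if_pos h] at hy'; exact hy' rfl
    simp only [Finset.mem_Icc] at hxI hyI
    omega
  · -- (b)
    by_cases hMufull : IsFull (n + 1) Mu
    · exact Or.inl hMufull
    right
    -- Extraction lemma for dividing lines of Mu with j = n+1.
    have extract : ∀ i, IsDividingLine (n + 1) i (n + 1) Mu →
        1 ≤ i ∧ i ≤ n ∧ x < 2 * i - 1 ∧ 2 * i - 1 ≤ y := by
      intro i hdl
      obtain ⟨hi1, hij, -, hcond⟩ := hdl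
      have hin : i ≤ n := by omega
      have hy' := hcond {2 * n, y} (by rw [hMu]; exact Finset.mem_insert_self _ _)
      have hx' := hcond {2 * n + 1, x}
        (by rw [hMu]; exact Finset.mem_insert_of_mem (Finset.mem_insert_self _ _))
      rw [pair_inter_card _ _ (by omega)] at hx' hy'
      have h2nI : (2 * n) ∈ Finset.Icc (2 * i - 1) (2 * (n + 1) - 2) := by
        simp only [Finset.mem_Icc]; omega
      have h2n1I : (2 * n + 1) ∉ Finset.Icc (2 * i - 1) (2 * (n + 1) - 2) := by
        simp only [Finset.mem_Icc]; omega
      rw [if_pos h2nI] at hy'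
      rw [if_neg h2n1I, zero_add] at hx'
      have hyI : y ∈ Finset.Icc (2 * i - 1) (2 * (n + 1) - 2) := by
        by_contra h; rw [if_neg h] at hy'; exact hy' rfl
      have hxI : x ∉ Finset.Icc (2 * i - 1) (2 * (n + 1) - 2) := by
        intro h; rw [if_pos h] at hx'; exact hx' rfl
      simp only [Finset.mem_Icc] at hyI hxI
      refine ⟨hi1, hin, by omega, by omega⟩
    -- Two dividing lines of Mu with j = n+1 coincide.
    have contra : ∀ i i', IsDividingLine (n + 1) i (n + 1) Mu →
        IsDividingLine (n + 1) i' (n + 1) Mu → i < i' → False := by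
      intro i i' h1 h2 hii
      obtain ⟨hi1, hin, hxi, hiy⟩ := extract i h1
      obtain ⟨hi'1, hi'n, hxi', hi'y⟩ := extract i' h2
      refine hfull i i' ⟨hi1, hii, hi'n, ?_⟩
      intro p hp
      by_cases hpxy : p = {x, y}
      · subst hpxy
        rw [pair_inter_card _ _ hxne]
        have hxI : x ∉ Finset.Icc (2 * i - 1) (2 * i' - 2) := by
          simp only [Finset.mem_Icc]; omega
        have hyI : y ∉ Finset.Icc (2 * i - 1) (2 * i' - 2) := by
          simp only [Finset.mem_Icc]; omega
        rw [if_neg hxI, if_neg hyI]; omega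
      · have hpMu : p ∈ Mu := by
          rw [hMu]
          exact Finset.mem_insert_of_mem (Finset.mem_insert_of_mem
            (Finset.mem_erase.2 ⟨hpxy, hp⟩))
        have ha := h1.2.2.2 p hpMu
        have hb := h2.2.2.2 p hpMu
        have hunion : Finset.Icc (2 * i - 1) (2 * (n + 1) - 2) =
            Finset.Icc (2 * i - 1) (2 * i' - 2) ∪
              Finset.Icc (2 * i' - 1) (2 * (n + 1) - 2) := by
          ext z
          simp only [Finset.mem_Icc, Finset.mem_union]
          omega
        have hsplit : p ∩ Finset.Icc (2 * i - 1) (2 * (n + 1) - 2) =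
            (p ∩ Finset.Icc (2 * i - 1) (2 * i' - 2)) ∪
              (p ∩ Finset.Icc (2 * i' - 1) (2 * (n + 1) - 2)) := by
          rw [hunion, Finset.inter_union_distrib_left]
        have hdis : Disjoint (p ∩ Finset.Icc (2 * i - 1) (2 * i' - 2))
            (p ∩ Finset.Icc (2 * i' - 1) (2 * (n + 1) - 2)) := by
          rw [Finset.disjoint_left]
          intro z hz hz'
          simp only [Finset.mem_inter, Finset.mem_Icc] at hz hz'
          omega
        have hcards : (p ∩ Finset.Icc (2 * i - 1) (2 * (n + 1) - 2)).card =
            (p ∩ Finset.Icc (2 * i - 1) (2 * i' - 2)).card +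
              (p ∩ Finset.Icc (2 * i' - 1) (2 * (n + 1) - 2)).card := by
          rw [hsplit, Finset.card_union_of_disjoint hdis]
        have hple : (p ∩ Finset.Icc (2 * i - 1) (2 * (n + 1) - 2)).card ≤ 2 := by
          calc (p ∩ Finset.Icc (2 * i - 1) (2 * (n + 1) - 2)).card ≤ p.card :=
                Finset.card_le_card Finset.inter_subset_left
            _ = 2 := hcard p hp
        omega
    -- Now assemble uniqueness.
    simp only [IsFull, not_forall, not_not] at hMufull
    obtain ⟨i0, j0, hdl0⟩ := hMufull
    have hj0 : j0 = n + 1 :=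
      key y x Mu (Finset.pair_comm y x) hy2n hx2n hMu i0 j0 hdl0
    subst hj0
    refine ⟨⟨(i0, n + 1), hdl0, ?_⟩, fun i j hdl =>
      key y x Mu (Finset.pair_comm y x) hy2n hx2n hMu i j hdl⟩
    rintro ⟨i, j⟩ hdl
    have hj : j = n + 1 := key y x Mu (Finset.pair_comm y x) hy2n hx2n hMu i j hdl
    subst hj
    have : i = i0 := by
      rcases lt_trichotomy i i0 with h | h | h
      · exact absurd (contra i i0 hdl hdl0 h) id
      · exact h
      · exact absurd (contra i0 i hdl0 hdl h) id
    simp [this]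
end
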